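/- Fix a total order c_1 < ... < c_N on the ray generators. Define a ℚ-linear map S of degree −1 on the positive-degree part of D_F as follows: for a monomial m = x_{i_1}^{h_1}⋯x_{i_s}^{h_s} τ_{j_1}⋯τ_{j_r} (with j_1<...<j_r, all h_i>0, r+s>0) let f = min(i_1, j_1) (with the convention min over an empty index is ∞); set S(m)=0 if f=j_1, and S(m)= x_{i_1}^{h_1−1}x_{i_2}^{h_2}⋯x_{i_s}^{h_s} τ_{i_1}τ_{j_1}⋯τ_{j_r} if f=i_1<j_1. Then Sd + dS equals the identity on the positive-degree part of D_F. -/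

import Mathlib

open scoped BigOperators

/-- A complete simplicial fan in a real vector space `V`, with rays indexed by `ι`
(with primitive ray generators `c i`) and cones given by the finite sets of rays
spanning them.  Completeness is expressed by the fact that every point of `V` has a
unique representation as a positive combination of the rays of a (unique) cone. -/
structure SimplicialFan (V : Type*) [AddCommGroup V] [Module ℝ V]
    (ι : Type*) [Fintype ι] [DecidableEq ι] where
  c : ι → V
  faces : Set (Finset ι)
  empty_mem : ∅ ∈ faces
  down_closed : ∀ S ∈ faces, ∀ S' ⊆ S, S' ∈ faces
  indep : ∀ S ∈ faces, LinearIndependent ℝ (fun i : S => c i)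
  complete : ∀ v : V, ∃! p : Finset ι × (ι → ℝ),
      p.1 ∈ faces ∧ (∀ i ∈ p.1, 0 < p.2 i) ∧ (∀ i ∉ p.1, p.2 i = 0) ∧
      v = ∑ i ∈ p.1, p.2 i • c i

namespace SimplicialFan

variable {V : Type*} [AddCommGroup V] [Module ℝ V]
variable {ι : Type*} [Fintype ι] [DecidableEq ι]

/-- The (closed) cone of the fan spanned by the set of rays `S`. -/
def cone (F : SimplicialFan V ι) (S : Finset ι) : Set V :=
  {v | ∃ a : ι → ℝ, (∀ i, 0 ≤ a i) ∧ (∀ i ∉ S, a i = 0) ∧ v = ∑ i ∈ S, a i • F.c i}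

/-- The relative interior of the cone spanned by the set of rays `S`. -/
def relint (F : SimplicialFan V ι) (S : Finset ι) : Set V :=
  {v | ∃ a : ι → ℝ, (∀ i ∈ S, 0 < a i) ∧ v = ∑ i ∈ S, a i • F.c i}

/-- `s : ι → V → ℝ` is the family of continuous piecewise linear "coordinate"
functions of the fan `F`: `s i` is continuous and, on the relative interior of each
cone, reads off the coefficient of the ray `c i` (being `0` if `i` is not a ray of
that cone). -/
def IsRayFunctions [TopologicalSpace V] (F : SimplicialFan V ι) (s : ι → V → ℝ) : Prop :=
  (∀ i, Continuous (s i)) ∧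
  ∀ S ∈ F.faces, ∀ a : ι → ℝ, (∀ i ∈ S, 0 < a i) → (∀ i ∉ S, a i = 0) →
    ∀ i, s i (∑ j ∈ S, a j • F.c j) = a i

end SimplicialFan
section KoszulModel

variable (ι : Type*) [Fintype ι] [DecidableEq ι] [LinearOrder ι]

/-- The underlying `ℚ`-module of `ℚ[x_c] ⊗ ⋀(τ_c)`: an element is the family of its
polynomial coefficients with respect to the exterior monomials `τ_S`, `S ⊆ ι`. -/
abbrev KModel := Finset ι → MvPolynomial ι ℚ

variable {ι}

/-- The basis element `x^h τ_S` of `ℚ[x_c] ⊗ ⋀(τ_c)` (with `τ_S` the wedge of the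
`τ_j`, `j ∈ S`, in increasing order). -/
noncomputable def bE (h : ι →₀ ℕ) (S : Finset ι) : KModel ι :=
  Pi.single S (MvPolynomial.monomial h 1)

/-- The Koszul differential `d` with `d x_c = 0`, `d τ_c = x_c`, extended as a graded
derivation, written in coordinates. -/
noncomputable def dK : KModel ι →ₗ[ℚ] KModel ι :=
  LinearMap.pi fun S' : Finset ι =>
    ∑ j ∈ S'ᶜ, (((-1 : MvPolynomial ι ℚ) ^ (S'.filter (· < j)).card *
        MvPolynomial.X j) • LinearMap.proj (R := ℚ) (insert j S'))

/-- The total degree `2·(deg of the polynomial part) + |S|` submodules: the span of the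
basis elements `x^h τ_S` of degree `k`. -/
noncomputable def degSub (k : ℕ) : Submodule ℚ (KModel ι) :=
  Submodule.span ℚ {m : KModel ι | ∃ (h : ι →₀ ℕ) (S : Finset ι),
    2 * (h.sum fun _ e => e) + S.card = k ∧ m = bE h S}

end KoszulModel

set_option linter.unusedSectionVars false

section AuxKoszul
variable {ι : Type*} [Fintype ι] [DecidableEq ι] [LinearOrder ι]

lemma bE_apply (h : ι →₀ ℕ) (S T : Finset ι) :
    bE h S T = if T = S then MvPolynomial.monomial h 1 else 0 := by
  simp [bE, Pi.single_apply]

lemma dK_apply (f : KModel ι) (S' : Finset ι) :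
    dK f S' = ∑ j ∈ S'ᶜ, ((-1 : MvPolynomial ι ℚ) ^ (S'.filter (· < j)).card *
      MvPolynomial.X j) * f (insert j S') := by
  simp [dK, LinearMap.pi_apply, LinearMap.sum_apply, smul_eq_mul]

lemma term_eq (n : ℕ) (j : ι) (h : ι →₀ ℕ) :
    (-1 : MvPolynomial ι ℚ) ^ n * MvPolynomial.X j * MvPolynomial.monomial h 1
      = ((-1 : ℚ) ^ n) • MvPolynomial.monomial (h + Finsupp.single j 1) 1 := by
  have : (MvPolynomial.X j : MvPolynomial ι ℚ) = MvPolynomial.monomial (Finsupp.single j 1) 1 := by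
    rw [MvPolynomial.X]
  rw [this, mul_assoc, MvPolynomial.monomial_mul, add_comm, one_mul]
  have h2 : ((-1 : MvPolynomial ι ℚ)) ^ n = MvPolynomial.C ((-1 : ℚ) ^ n) := by simp
  rw [h2, MvPolynomial.C_mul']

lemma dK_bE (h : ι →₀ ℕ) (S : Finset ι) :
    dK (bE h S) = ∑ j ∈ S, ((-1 : ℚ) ^ (S.filter (· < j)).card) •
      bE (h + Finsupp.single j 1) (S.erase j) := by
  funext S'
  rw [dK_apply]
  simp only [Finset.sum_apply, Pi.smul_apply, bE_apply]
  by_cases hc : ∃ j ∈ S, j ∉ S' ∧ S' = S.erase j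
  · obtain ⟨j₀, hj₀S, hj₀S', hS'⟩ := hc
    rw [Finset.sum_eq_single j₀, Finset.sum_eq_single j₀]
    · subst hS'
      rw [if_pos (Finset.insert_erase hj₀S), if_pos rfl]
      rw [Finset.filter_erase, Finset.erase_eq_of_notMem (by simp)]
      exact term_eq _ _ _
    · intro j hjS hjne
      rw [if_neg, smul_zero]
      intro hEq
      exact hjne (by
        by_contra hne
        have : j₀ ∈ S.erase j := Finset.mem_erase.2 ⟨fun hh => hjne hh.symm, hj₀S⟩
        rw [← hEq, hS'] at this
        exact (Finset.notMem_erase j₀ S) this)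
    · intro hj; exact absurd hj₀S hj
    · intro j hjc hjne
      rw [if_neg, mul_zero]
      intro hEq
      apply hjne
      have hjS'' : j ∉ S' := by simpa using hjc
      have herase : S.erase j = S' := by rw [← hEq, Finset.erase_insert hjS'']
      by_contra hne
      have hj0mem : j₀ ∈ S.erase j := Finset.mem_erase.2 ⟨fun hh => hne hh.symm, hj₀S⟩
      rw [herase, hS'] at hj0mem
      exact Finset.notMem_erase j₀ S hj0mem
    · intro hj
      exact absurd (Finset.mem_compl.2 hj₀S') hj
  · rw [Finset.sum_eq_zero, Finset.sum_eq_zero]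
    · intro j hjS
      rw [if_neg, smul_zero]
      intro hEq
      exact hc ⟨j, hjS, hEq ▸ Finset.notMem_erase j S, hEq⟩
    · intro j hjc
      rw [if_neg, mul_zero]
      intro hEq
      have hjS' : j ∉ S' := by simpa using hjc
      exact hc ⟨j, hEq ▸ Finset.mem_insert_self j S', hjS',
        by rw [← hEq, Finset.erase_insert hjS']⟩

end AuxKoszul

section Homotopy
variable {ι : Type*} [Fintype ι] [DecidableEq ι] [LinearOrder ι]
variable (Smap : KModel ι →ₗ[ℚ] KModel ι)
variable (hS0 : ∀ (h : ι →₀ ℕ) (T : Finset ι) (hT : T.Nonempty),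
      (∀ i ∈ h.support, T.min' hT ≤ i) → Smap (bE h T) = 0)
variable (hS1 : ∀ (h : ι →₀ ℕ) (T : Finset ι) (i₁ : ι), i₁ ∈ h.support →
      (∀ i ∈ h.support, i₁ ≤ i) → (∀ j ∈ T, i₁ < j) →
      Smap (bE h T) = bE (h - Finsupp.single i₁ 1) (insert i₁ T))

include hS0 hS1

lemma caseA (h : ι →₀ ℕ) (S : Finset ι) (hS : S.Nonempty)
    (hmin : ∀ i ∈ h.support, S.min' hS ≤ i) :
    Smap (dK (bE h S)) + dK (Smap (bE h S)) = bE h S := by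
  have hj₀S : S.min' hS ∈ S := S.min'_mem hS
  set j₀ := S.min' hS with hj₀
  rw [hS0 h S hS hmin, map_zero, add_zero, dK_bE, map_sum]
  rw [Finset.sum_eq_single j₀]
  · have hfilter : S.filter (· < j₀) = ∅ :=
      Finset.filter_eq_empty_iff.2 (fun {j} hj => not_lt.2 (S.min'_le j hj))
    have hmem : j₀ ∈ (h + Finsupp.single j₀ 1).support := by
      rw [Finsupp.mem_support_iff]; simp [Finsupp.add_apply]
    have hle : ∀ i ∈ (h + Finsupp.single j₀ 1).support, j₀ ≤ i := by
      intro i hi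
      have := Finsupp.support_add hi
      rw [Finset.mem_union] at this
      rcases this with hi' | hi'
      · exact hmin i hi'
      · have : i = j₀ := Finset.mem_singleton.1 (Finsupp.support_single_subset hi')
        exact this.ge
    have hlt : ∀ j ∈ S.erase j₀, j₀ < j := by
      intro j hj
      rcases Finset.mem_erase.1 hj with ⟨hne, hjS⟩
      exact lt_of_le_of_ne (S.min'_le j hjS) (Ne.symm hne)
    rw [map_smul, hS1 (h + Finsupp.single j₀ 1) (S.erase j₀) j₀ hmem hle hlt,
      hfilter, add_tsub_cancel_right, Finset.insert_erase hj₀S]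
    simp
  · intro j hjS hjne
    have hj₀e : j₀ ∈ S.erase j := Finset.mem_erase.2 ⟨fun hh => hjne hh.symm, hj₀S⟩
    have hne : (S.erase j).Nonempty := ⟨j₀, hj₀e⟩
    rw [map_smul, hS0 (h + Finsupp.single j 1) (S.erase j) hne ?_, smul_zero]
    intro i hi
    have hle0 : (S.erase j).min' hne ≤ j₀ := Finset.min'_le _ _ hj₀e
    have := Finsupp.support_add hi
    rw [Finset.mem_union] at this
    rcases this with hi' | hi'
    · exact le_trans hle0 (hmin i hi')
    · have : i = j := Finset.mem_singleton.1 (Finsupp.support_single_subset hi')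
      rw [this]; exact le_trans hle0 (S.min'_le j hjS)
  · intro hj; exact absurd hj₀S hj

lemma caseB (h : ι →₀ ℕ) (S : Finset ι) (i₁ : ι) (hi₁ : i₁ ∈ h.support)
    (hmin : ∀ i ∈ h.support, i₁ ≤ i) (hlt : ∀ j ∈ S, i₁ < j) :
    Smap (dK (bE h S)) + dK (Smap (bE h S)) = bE h S := by
  have hi₁S : i₁ ∉ S := fun hm => lt_irrefl _ (hlt i₁ hm)
  have hpos : 1 ≤ h i₁ := Nat.one_le_iff_ne_zero.2 (Finsupp.mem_support_iff.1 hi₁)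
  rw [hS1 h S i₁ hi₁ hmin hlt]
  rw [dK_bE h S, map_sum, dK_bE (h - Finsupp.single i₁ 1) (insert i₁ S),
    Finset.sum_insert hi₁S]
  have e1 : (insert i₁ S).filter (· < i₁) = ∅ := by
    apply Finset.filter_eq_empty_iff.2
    intro j hj
    rcases Finset.mem_insert.1 hj with rfl | hjS
    · exact lt_irrefl _
    · exact not_lt.2 (le_of_lt (hlt j hjS))
  have e2 : h - Finsupp.single i₁ 1 + Finsupp.single i₁ 1 = h :=
    tsub_add_cancel_of_le (Finsupp.single_le_iff.2 hpos)
  have e3 : (insert i₁ S).erase i₁ = S := Finset.erase_insert hi₁S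
  rw [e1, e2, e3]
  simp only [Finset.card_empty, pow_zero, one_smul]
  have hterm : ∀ j ∈ S, Smap (((-1 : ℚ) ^ (S.filter (· < j)).card) •
      bE (h + Finsupp.single j 1) (S.erase j)) =
      ((-1 : ℚ) ^ (S.filter (· < j)).card) •
      bE (h - Finsupp.single i₁ 1 + Finsupp.single j 1) ((insert i₁ S).erase j) := by
    intro j hj
    have hne : i₁ ≠ j := (hlt j hj).ne
    have hmem : i₁ ∈ (h + Finsupp.single j 1).support := by
      rw [Finsupp.mem_support_iff, Finsupp.add_apply]
      omega
    have hle : ∀ i ∈ (h + Finsupp.single j 1).support, i₁ ≤ i := by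
      intro i hi
      have := Finsupp.support_add hi
      rw [Finset.mem_union] at this
      rcases this with hi' | hi'
      · exact hmin i hi'
      · have : i = j := Finset.mem_singleton.1 (Finsupp.support_single_subset hi')
        rw [this]; exact (hlt j hj).le
    have hlt' : ∀ j' ∈ S.erase j, i₁ < j' := fun j' hj' =>
      hlt j' (Finset.mem_of_mem_erase hj')
    have harg : h + Finsupp.single j 1 - Finsupp.single i₁ 1
        = h - Finsupp.single i₁ 1 + Finsupp.single j 1 := by
      ext a
      simp only [Finsupp.coe_tsub, Finsupp.coe_add, Pi.sub_apply, Pi.add_apply,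
        Finsupp.single_apply]
      split_ifs with h1 h2
      · exact absurd (h2.trans h1.symm) hne
      all_goals omega
    rw [map_smul, hS1 (h + Finsupp.single j 1) (S.erase j) i₁ hmem hle hlt', harg,
      Finset.erase_insert_of_ne hne]
  rw [Finset.sum_congr rfl hterm]
  have hsign : ∀ j ∈ S, ((insert i₁ S).filter (· < j)).card =
      (S.filter (· < j)).card + 1 := by
    intro j hj
    rw [Finset.filter_insert, if_pos (hlt j hj),
      Finset.card_insert_of_notMem (fun hm => hi₁S (Finset.mem_of_mem_filter i₁ hm))]
  rw [add_comm (bE h S) _, ← add_assoc, ← Finset.sum_add_distrib]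
  have hzero : (∑ j ∈ S, (((-1 : ℚ) ^ (S.filter (· < j)).card) •
      bE (h - Finsupp.single i₁ 1 + Finsupp.single j 1) ((insert i₁ S).erase j) +
      ((-1 : ℚ) ^ ((insert i₁ S).filter (· < j)).card) •
      bE (h - Finsupp.single i₁ 1 + Finsupp.single j 1) ((insert i₁ S).erase j))) = 0 := by
    apply Finset.sum_eq_zero
    intro j hj
    rw [hsign j hj, ← add_smul, pow_succ]
    simp
  rw [hzero, zero_add]

lemma key (h : ι →₀ ℕ) (S : Finset ι) (hpos : 0 < 2 * (h.sum fun _ e => e) + S.card) :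
    Smap (dK (bE h S)) + dK (Smap (bE h S)) = bE h S := by
  rcases h.support.eq_empty_or_nonempty with he | hne
  · have hz : h = 0 := Finsupp.support_eq_empty.1 he
    have hSne : S.Nonempty := by
      rw [Finset.nonempty_iff_ne_empty]
      rintro rfl
      simp [hz, Finsupp.sum_zero_index] at hpos
    exact caseA Smap hS0 hS1 h S hSne (fun i hi => by rw [he] at hi; simp at hi)
  · have hi₁ : h.support.min' hne ∈ h.support := Finset.min'_mem _ _
    have hmin : ∀ i ∈ h.support, h.support.min' hne ≤ i :=
      fun i hi => Finset.min'_le _ _ hi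
    rcases S.eq_empty_or_nonempty with rfl | hSne
    · exact caseB Smap hS0 hS1 h ∅ _ hi₁ hmin (fun j hj => absurd hj (Finset.notMem_empty j))
    · by_cases hcmp : S.min' hSne ≤ h.support.min' hne
      · exact caseA Smap hS0 hS1 h S hSne (fun i hi => le_trans hcmp (hmin i hi))
      · exact caseB Smap hS0 hS1 h S _ hi₁ hmin
          (fun j hj => lt_of_lt_of_le (lt_of_not_ge hcmp) (S.min'_le j hj))
end Homotopy


/-- Fix a total order on the rays. Let `S` be the linear map of
degree `-1` defined on monomials `m = x_{i_1}^{h_1}⋯x_{i_s}^{h_s} τ_{j_1}⋯τ_{j_r}`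
(positive degree) by: `S m = 0` if `min(i_1, j_1) = j_1`, and
`S m = x_{i_1}^{h_1-1}⋯ τ_{i_1}τ_{j_1}⋯τ_{j_r}` if `min(i_1,j_1) = i_1 < j_1`.
Then `S∘d + d∘S` is the identity on the positive-degree part of the Koszul
algebra `ℚ[x_c] ⊗ ⋀(τ_c)`. -/
theorem stmt8 {ι : Type*} [Fintype ι] [DecidableEq ι] [LinearOrder ι]
    (Smap : KModel ι →ₗ[ℚ] KModel ι)
    (hS0 : ∀ (h : ι →₀ ℕ) (T : Finset ι) (hT : T.Nonempty),
      (∀ i ∈ h.support, T.min' hT ≤ i) → Smap (bE h T) = 0)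
    (hS1 : ∀ (h : ι →₀ ℕ) (T : Finset ι) (i₁ : ι), i₁ ∈ h.support →
      (∀ i ∈ h.support, i₁ ≤ i) → (∀ j ∈ T, i₁ < j) →
      Smap (bE h T) = bE (h - Finsupp.single i₁ 1) (insert i₁ T)) :
    ∀ k : ℕ, 0 < k → ∀ f ∈ degSub (ι := ι) k,
      Smap (dK f) + dK (Smap f) = f := by
  intro k hk f hf
  have hker : degSub (ι := ι) k ≤
      LinearMap.ker (Smap ∘ₗ dK + dK ∘ₗ Smap - LinearMap.id) := by
    rw [degSub]
    apply Submodule.span_le.2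
    rintro m ⟨h, S, hdeg, rfl⟩
    simp only [SetLike.mem_coe, LinearMap.mem_ker, LinearMap.sub_apply,
      LinearMap.add_apply, LinearMap.comp_apply, LinearMap.id_apply]
    rw [key Smap hS0 hS1 h S (by omega), sub_self]
  have h0 : Smap (dK f) + dK (Smap f) - f = 0 := by
    simpa [LinearMap.sub_apply, LinearMap.add_apply, LinearMap.comp_apply]
      using hker hf
  exact sub_eq_zero.1 h0
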